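/- For every computable functional unit H for ℕ there exists a computable functional unit H' for ℕ with at most three method operations such that H ≤ H'. -/

import Mathlib

/-- Primitive instructions: plain basic `f.m`, positive test `+f.m`, negative test `-f.m`
(method names are natural numbers, there is a single focus `f`), forward jump `#l`,
backward jump `\l`, and the positive/negative termination instructions `!t` / `!f`. -/
inductive Instr : Type where
  | basic (m : ℕ)
  | postest (m : ℕ)
  | negtest (m : ℕ)
  | fjump (l : ℕ)
  | bjump (l : ℕ)
  | haltT
  | haltF
deriving DecidableEq

/-- A functional unit for a state space `S`: a finite, functional set of
(method name, method operation) pairs, where a method operation is a total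
function `S → Bool × S`. -/
structure FU (S : Type*) where
  carrier : Set (ℕ × (S → Bool × S))
  finite : carrier.Finite
  functional : ∀ {m : ℕ} {M M' : S → Bool × S},
    (m, M) ∈ carrier → (m, M') ∈ carrier → M = M'

/-- The interface of a functional unit: the set of method names occurring in it. -/
def FU.iface {S : Type*} (H : FU S) : Set ℕ := {m | ∃ M, (m, M) ∈ H.carrier}

/-- The method operation named `m` in `H` (an arbitrary fixed value if `m ∉ I(H)`). -/
noncomputable def FU.op {S : Type*} (H : FU S) (m : ℕ) (s : S) : Bool × S :=
  letI := Classical.propDecidable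
  if h : ∃ M, (m, M) ∈ H.carrier then h.choose s else (true, s)

/-- The restriction `⟨I, H⟩` of a functional unit to a set `I` of method names. -/
def FU.restrict {S : Type*} (H : FU S) (I : Set ℕ) : FU S where
  carrier := {p ∈ H.carrier | p.1 ∈ I}
  finite := H.finite.subset (Set.sep_subset _ _)
  functional := fun hM hM' => H.functional hM.1 hM'.1

/-- The method names used by an instruction all belong to `I`. -/
def Instr.namesIn (I : Set ℕ) : Instr → Prop
  | .basic m => m ∈ I
  | .postest m => m ∈ I
  | .negtest m => m ∈ I
  | _ => True

/-- An instruction sequence over a set `I` of method names: a finite nonempty list of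
primitive instructions whose method names belong to `I`. -/
def InstrSeqOver (I : Set ℕ) (x : List Instr) : Prop :=
  x ≠ [] ∧ ∀ u ∈ x, u.namesIn I

/-- `Exec H x i s b s'` : execution of the instruction sequence `x` on the functional
unit `H`, from (0-based) position `i` in state `s`, terminates delivering the Boolean
value `b` with final state `s'`.  (Position `i` here corresponds to the 1-based
position `i+1`; positions outside the sequence, jumps `#0`/`\0`, and infinite
executions admit no derivation, i.e. execution does not terminate.) -/
inductive Exec {S : Type*} (H : FU S) (x : List Instr) : ℕ → S → Bool → S → Prop where
  | basic {i : ℕ} {s : S} {b : Bool} {s' : S} (m : ℕ)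
      (hu : x[i]? = some (Instr.basic m))
      (h : Exec H x (i + 1) (H.op m s).2 b s') : Exec H x i s b s'
  | posT {i : ℕ} {s : S} {b : Bool} {s' : S} (m : ℕ)
      (hu : x[i]? = some (Instr.postest m)) (hr : (H.op m s).1 = true)
      (h : Exec H x (i + 1) (H.op m s).2 b s') : Exec H x i s b s'
  | posF {i : ℕ} {s : S} {b : Bool} {s' : S} (m : ℕ)
      (hu : x[i]? = some (Instr.postest m)) (hr : (H.op m s).1 = false)
      (h : Exec H x (i + 2) (H.op m s).2 b s') : Exec H x i s b s'
  | negT {i : ℕ} {s : S} {b : Bool} {s' : S} (m : ℕ)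
      (hu : x[i]? = some (Instr.negtest m)) (hr : (H.op m s).1 = true)
      (h : Exec H x (i + 2) (H.op m s).2 b s') : Exec H x i s b s'
  | negF {i : ℕ} {s : S} {b : Bool} {s' : S} (m : ℕ)
      (hu : x[i]? = some (Instr.negtest m)) (hr : (H.op m s).1 = false)
      (h : Exec H x (i + 1) (H.op m s).2 b s') : Exec H x i s b s'
  | fjump {i : ℕ} {s : S} {b : Bool} {s' : S} (l : ℕ)
      (hu : x[i]? = some (Instr.fjump l))
      (h : Exec H x (i + l) s b s') : Exec H x i s b s'
  | bjump {i : ℕ} {s : S} {b : Bool} {s' : S} (l : ℕ)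
      (hu : x[i]? = some (Instr.bjump l)) (hl : l ≤ i)
      (h : Exec H x (i - l) s b s') : Exec H x i s b s'
  | haltT {i : ℕ} {s : S} (hu : x[i]? = some Instr.haltT) : Exec H x i s true s
  | haltF {i : ℕ} {s : S} (hu : x[i]? = some Instr.haltF) : Exec H x i s false s

/-- `M` is a derived method operation of `H`: there is an instruction sequence `x`
over `I(H)` whose produced partial method operation `⌈x⌉_H` is total and equals `M`. -/
def DerivedOp {S : Type*} (H : FU S) (M : S → Bool × S) : Prop :=
  ∃ x : List Instr, InstrSeqOver H.iface x ∧ ∀ s, Exec H x 0 s (M s).1 (M s).2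

/-- `H ≤ H'` : every method operation of `H` is a derived method operation of `H'`. -/
def FU.le {S : Type*} (H H' : FU S) : Prop :=
  ∀ m M, (m, M) ∈ H.carrier → DerivedOp H' M

/-- `H ≡ H'` : `H ≤ H'` and `H' ≤ H`. -/
def FU.equiv {S : Type*} (H H' : FU S) : Prop := FU.le H H' ∧ FU.le H' H

/-- A method operation on ℕ is computable if both its components are. -/
def ComputableMO (M : ℕ → Bool × ℕ) : Prop :=
  Computable (fun n => (M n).1) ∧ Computable (fun n => (M n).2)

/-- A functional unit for ℕ is computable if all its method operations are. -/
def ComputableFU (H : FU ℕ) : Prop :=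
  ∀ m M, (m, M) ∈ H.carrier → ComputableMO M


/-!
The index of a method can be stored in the state itself. With Cantor pairing, three
operations suffice: `f.0` tags the state `n` as `⟨n, 0⟩`, `f.1` increments the tag, and `f.2`
runs on `⟨n, i⟩` the `i`-th method operation of `H` on `n`. The `i`-th method of `H` is then
derived by `f.0; f.1; …; f.1; +f.2; !t; !f` with `i` copies of `f.1`, and the three
operations are computable because `f.2` is a finite case distinction over computable ones.
-/

namespace FU

variable {S : Type*}

theorem op_eq_of_mem (H : FU S) {m : ℕ} {M : S → Bool × S} (h : (m, M) ∈ H.carrier) :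
    H.op m = M := by
  have hex : ∃ M', (m, M') ∈ H.carrier := ⟨M, h⟩
  funext s
  rw [FU.op, dif_pos hex]
  exact congrFun (H.functional hex.choose_spec h) s

noncomputable def opList (H : FU S) : List (S → Bool × S) :=
  H.finite.toFinset.toList.map Prod.snd

theorem mem_opList {H : FU S} {M : S → Bool × S} : M ∈ H.opList ↔ ∃ m, (m, M) ∈ H.carrier := by
  simp [opList]

def ofThree (M₀ M₁ M₂ : S → Bool × S) : FU S where
  carrier := {(0, M₀), (1, M₁), (2, M₂)}
  finite := by simp
  functional := by
    intro m M M' hM hM'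
    simp only [Set.mem_insert_iff, Set.mem_singleton_iff, Prod.mk.injEq] at hM hM'
    rcases hM with ⟨rfl, rfl⟩ | ⟨rfl, rfl⟩ | ⟨rfl, rfl⟩ <;> simp_all

variable (M₀ M₁ M₂ : S → Bool × S)

theorem ncard_ofThree_le : (ofThree M₀ M₁ M₂).carrier.ncard ≤ 3 :=
  calc (ofThree M₀ M₁ M₂).carrier.ncard ≤ ({(1, M₁), (2, M₂)} : Set _).ncard + 1 :=
        Set.ncard_insert_le _ _
    _ ≤ ({(2, M₂)} : Set _).ncard + 1 + 1 := by gcongr; exact Set.ncard_insert_le _ _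
    _ = 3 := by rw [Set.ncard_singleton]

end FU

section Exec

variable {S : Type*} {H : FU S} {x : List Instr}

theorem Exec.of_test_halt {j m : ℕ} {s : S} (ht : x[j]? = some (.postest m))
    (h1 : x[j + 1]? = some .haltT) (h2 : x[j + 2]? = some .haltF) :
    Exec H x j s (H.op m s).1 (H.op m s).2 := by
  cases hb : (H.op m s).1
  · exact .posF m ht hb (.haltF h2)
  · exact .posT m ht hb (.haltT h1)

theorem Exec.of_basic_run {m j i : ℕ} {s s' : S} {b : Bool}
    (hx : ∀ k < i, x[j + k]? = some (.basic m))
    (h : Exec H x (j + i) ((fun s => (H.op m s).2)^[i] s) b s') : Exec H x j s b s' := by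
  induction i generalizing j s with
  | zero => exact h
  | succ i ih =>
    refine .basic m (hx 0 i.succ_pos) (ih (fun k hk => ?_) ?_)
    · rw [add_assoc, add_comm 1]; exact hx (k + 1) (by omega)
    · rwa [add_right_comm, add_assoc, ← Function.iterate_succ_apply]

end Exec

def selectProg (i : ℕ) : List Instr :=
  .basic 0 :: (List.replicate i (.basic 1) ++ [.postest 2, .haltT, .haltF])

theorem instrSeqOver_selectProg {I : Set ℕ} (h₀ : 0 ∈ I) (h₁ : 1 ∈ I) (h₂ : 2 ∈ I) (i : ℕ) :
    InstrSeqOver I (selectProg i) := by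
  refine ⟨List.cons_ne_nil _ _, fun u hu => ?_⟩
  simp only [selectProg, List.mem_cons, List.mem_append, List.mem_replicate,
    List.not_mem_nil, or_false] at hu
  rcases hu with rfl | ⟨-, rfl⟩ | rfl | rfl | rfl <;> trivial

theorem exec_selectProg {S : Type*} (H : FU S) (i : ℕ) (s : S) :
    let t := (fun s => (H.op 1 s).2)^[i] (H.op 0 s).2
    Exec H (selectProg i) 0 s (H.op 2 t).1 (H.op 2 t).2 := by
  have htail (k : ℕ) : (selectProg i)[i + 1 + k]? = [.postest 2, .haltT, .haltF][k]? := by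
    rw [selectProg, add_right_comm, List.getElem?_cons_succ,
      List.getElem?_append_right (by simp)]
    simp
  refine .basic 0 rfl (Exec.of_basic_run (fun k hk => ?_) (Exec.of_test_halt ?_ ?_ ?_))
  · rw [selectProg, add_comm, List.getElem?_cons_succ, List.getElem?_append_left (by simpa),
      List.getElem?_replicate_of_lt hk]
  · convert htail 0 using 2 <;> first | rfl | omega
  · convert htail 1 using 2 <;> first | rfl | omega
  · convert htail 2 using 2 <;> first | rfl | omega

section Dispatch

open Nat (pair unpair)

def tagOp (n : ℕ) : Bool × ℕ := (true, pair n 0)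

def incTagOp (n : ℕ) : Bool × ℕ := (true, pair (unpair n).1 ((unpair n).2 + 1))

/-- On `⟨n, i⟩`, runs `L[i]` on `n`; out-of-range tags give the dummy `(true, ·)`. -/
def dispatchOp : List (ℕ → Bool × ℕ) → ℕ → Bool × ℕ
  | [], n => (true, n)
  | M :: L, n =>
      bif (unpair n).2 == 0 then M (unpair n).1
      else dispatchOp L (pair (unpair n).1 ((unpair n).2 - 1))

theorem iterate_incTagOp (n i j : ℕ) :
    (fun n => (incTagOp n).2)^[i] (pair n j) = pair n (j + i) := by
  induction i generalizing j with
  | zero => rfl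
  | succ i ih =>
    rw [Function.iterate_succ_apply, incTagOp, Nat.unpair_pair, ih, add_right_comm, add_assoc]

theorem dispatchOp_pair (L : List (ℕ → Bool × ℕ)) (n i : ℕ) (hi : i < L.length) :
    dispatchOp L (pair n i) = L[i] n := by
  induction L generalizing i with
  | nil => simp at hi
  | cons M L ih =>
    cases i with
    | zero => simp [dispatchOp]
    | succ i => simpa [dispatchOp] using ih i (by simpa using hi)

theorem computableMO_tagOp : ComputableMO tagOp :=
  ⟨Computable.const true, (Primrec₂.natPair.comp Primrec.id (Primrec.const 0)).to_comp⟩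

theorem computableMO_incTagOp : ComputableMO incTagOp :=
  ⟨Computable.const true, (Primrec₂.natPair.comp (Primrec.fst.comp Primrec.unpair)
    (Primrec.succ.comp (Primrec.snd.comp Primrec.unpair))).to_comp⟩

theorem computableMO_dispatchOp (L : List (ℕ → Bool × ℕ)) (hL : ∀ M ∈ L, ComputableMO M) :
    ComputableMO (dispatchOp L) := by
  induction L with
  | nil => exact ⟨Computable.const true, Computable.id⟩
  | cons M L ih =>
    obtain ⟨hM₁, hM₂⟩ := hL M List.mem_cons_self
    obtain ⟨hL₁, hL₂⟩ := ih fun N hN => hL N (List.mem_cons_of_mem _ hN)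
    have hval : Computable fun n => (unpair n).1 := (Primrec.fst.comp Primrec.unpair).to_comp
    have htest : Computable fun n => (unpair n).2 == 0 :=
      (Primrec.eq.comp (Primrec.snd.comp Primrec.unpair) (Primrec.const 0)).decide.to_comp
    have hdec : Computable fun n => pair (unpair n).1 ((unpair n).2 - 1) :=
      (Primrec₂.natPair.comp (Primrec.fst.comp Primrec.unpair)
        (Primrec.pred.comp (Primrec.snd.comp Primrec.unpair))).to_comp
    have hcond : ∀ n, dispatchOp (M :: L) n =
        bif (unpair n).2 == 0 then M (unpair n).1
        else dispatchOp L (pair (unpair n).1 ((unpair n).2 - 1)) := fun _ => rfl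
    constructor
    · refine (Computable.cond htest (hM₁.comp hval) (hL₁.comp hdec)).of_eq fun n => ?_
      rw [hcond]; cases (unpair n).2 == 0 <;> rfl
    · refine (Computable.cond htest (hM₂.comp hval) (hL₂.comp hdec)).of_eq fun n => ?_
      rw [hcond]; cases (unpair n).2 == 0 <;> rfl

def dispatchUnit (L : List (ℕ → Bool × ℕ)) : FU ℕ :=
  FU.ofThree tagOp incTagOp (dispatchOp L)

theorem derivedOp_dispatchUnit (L : List (ℕ → Bool × ℕ)) (i : ℕ) (hi : i < L.length) :
    DerivedOp (dispatchUnit L) L[i] := by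
  have m₀ : (0, tagOp) ∈ (dispatchUnit L).carrier := by simp [dispatchUnit, FU.ofThree]
  have m₁ : (1, incTagOp) ∈ (dispatchUnit L).carrier := by simp [dispatchUnit, FU.ofThree]
  have m₂ : (2, dispatchOp L) ∈ (dispatchUnit L).carrier := by simp [dispatchUnit, FU.ofThree]
  have h₀ := (dispatchUnit L).op_eq_of_mem m₀
  have h₁ := (dispatchUnit L).op_eq_of_mem m₁
  have h₂ := (dispatchUnit L).op_eq_of_mem m₂
  refine ⟨selectProg i,
    instrSeqOver_selectProg (I := (dispatchUnit L).iface) ⟨_, m₀⟩ ⟨_, m₁⟩ ⟨_, m₂⟩ i, fun s => ?_⟩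
  simpa only [h₀, h₁, h₂, tagOp, iterate_incTagOp, zero_add, dispatchOp_pair L s i hi]
    using exec_selectProg (dispatchUnit L) i s

theorem computableFU_dispatchUnit (L : List (ℕ → Bool × ℕ)) (hL : ∀ M ∈ L, ComputableMO M) :
    ComputableFU (dispatchUnit L) := by
  intro m M hM
  simp only [dispatchUnit, FU.ofThree, Set.mem_insert_iff, Set.mem_singleton_iff,
    Prod.mk.injEq] at hM
  rcases hM with ⟨-, rfl⟩ | ⟨-, rfl⟩ | ⟨-, rfl⟩
  exacts [computableMO_tagOp, computableMO_incTagOp, computableMO_dispatchOp L hL]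

end Dispatch

/-- For every computable functional unit `H` for ℕ there is a computable functional
unit `H'` for ℕ with at most three method operations such that `H ≤ H'`. -/
theorem exists_three_op_extension (H : FU ℕ) (hH : ComputableFU H) :
    ∃ H' : FU ℕ, ComputableFU H' ∧ H'.carrier.ncard ≤ 3 ∧ FU.le H H' := by
  refine ⟨dispatchUnit H.opList, computableFU_dispatchUnit _ fun M hM => ?_,
    FU.ncard_ofThree_le _ _ _, fun m M hmM => ?_⟩
  · obtain ⟨m, hm⟩ := FU.mem_opList.mp hM
    exact hH m M hm
  · obtain ⟨i, hi, rfl⟩ := List.mem_iff_getElem.mp (FU.mem_opList.mpr ⟨m, hmM⟩)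
    exact derivedOp_dispatchUnit _ i hi
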